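/- arXiv:1906.00965 — 6 statements merged into one kernel-verified Lean document; each statement's English description precedes it below -/
import Mathlib

section
/- For every real n×n matrix M (not necessarily invertible), there exists an invertible real n×n matrix A such that M = A - (A⁻¹)ᵀ. -/
open Matrix

section SqrtAux
open scoped MatrixOrder Matrix.Norms.L2Operator in
lemma stmt1_sqrt_aux {n : ℕ} (A : Matrix (Fin n) (Fin n) ℝ) (hA : A.PosSemidef) :
    ∃ S : Matrix (Fin n) (Fin n) ℝ, Sᴴ = S ∧ S * S = A :=
  ⟨CFC.sqrt A, (CFC.sqrt_nonneg A).isSelfAdjoint, CFC.sqrt_mul_sqrt_self A hA.nonneg⟩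
end SqrtAux

noncomputable section Stmt1Aux

attribute [local instance] Matrix.normedAddCommGroup

namespace Stmt1Aux

variable {n : ℕ}

/-- The scalar solution of `g * (g - d) = 1`. -/
def g (d : ℝ) : ℝ := d / 2 + Real.sqrt (d ^ 2 / 4 + 1)

lemma g_mul (d : ℝ) : g d * (g d - d) = 1 := by
  have h : (0:ℝ) ≤ d ^ 2 / 4 + 1 := by positivity
  have hs := Real.sq_sqrt h
  unfold g
  nlinarith [hs]

/-- Solve `B * (B - N) = 1` with `B` symmetric, for symmetric `N`. -/
lemma exists_sym (N : Matrix (Fin n) (Fin n) ℝ) (hN : N.IsHermitian) :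
    ∃ B : Matrix (Fin n) (Fin n) ℝ, Bᵀ = B ∧ B * (B - N) = 1 := by
  classical
  set U : Matrix (Fin n) (Fin n) ℝ := (hN.eigenvectorUnitary : Matrix (Fin n) (Fin n) ℝ) with hUdef
  have hUU : star U * U = 1 := Matrix.mem_unitaryGroup_iff'.mp hN.eigenvectorUnitary.2
  have hUU' : U * star U = 1 := Matrix.mem_unitaryGroup_iff.mp hN.eigenvectorUnitary.2
  set μ : Fin n → ℝ := hN.eigenvalues with hμdef
  have hspec : N = U * Matrix.diagonal μ * star U := by
    have := hN.spectral_theorem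
    rwa [RCLike.ofReal_real_eq_id, Function.id_comp] at this
  set D : Matrix (Fin n) (Fin n) ℝ := Matrix.diagonal (fun i => g (μ i)) with hDdef
  refine ⟨U * D * star U, ?_, ?_⟩
  · have : (U * D * star U)ᴴ = U * D * star U := by
      simp [Matrix.conjTranspose_mul, Matrix.star_eq_conjTranspose, hDdef,
        Matrix.diagonal_conjTranspose, Matrix.mul_assoc]
    rwa [Matrix.conjTranspose_eq_transpose_of_trivial] at this
  · have hsub : U * D * star U - N = U * (D - Matrix.diagonal μ) * star U := by
      rw [hspec, Matrix.mul_sub, Matrix.sub_mul]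
    rw [hsub]
    calc U * D * star U * (U * (D - Matrix.diagonal μ) * star U)
        = U * D * (star U * U) * ((D - Matrix.diagonal μ) * star U) := by
          simp only [Matrix.mul_assoc]
      _ = U * (D * (D - Matrix.diagonal μ)) * star U := by
          rw [hUU]; simp only [Matrix.mul_one, Matrix.mul_assoc]
      _ = U * 1 * star U := by
          have hD1 : D * (D - Matrix.diagonal μ) = 1 := by
            rw [hDdef, Matrix.diagonal_sub, Matrix.diagonal_mul_diagonal]
            simp [g_mul]
          rw [hD1]
      _ = 1 := by rw [Matrix.mul_one, hUU']

/-- Polar-type decomposition for invertible matrices. -/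
lemma exists_polar_invertible (M : Matrix (Fin n) (Fin n) ℝ) (h : IsUnit M.det) :
    ∃ Q N : Matrix (Fin n) (Fin n) ℝ, Qᵀ * Q = 1 ∧ Nᵀ = N ∧ M = Q * N := by
  classical
  have hps : (Mᴴ * M).PosSemidef := Matrix.posSemidef_conjTranspose_mul_self M
  obtain ⟨S, hSsym0, hSS0⟩ := stmt1_sqrt_aux (Mᴴ * M) hps
  have hSsym : Sᵀ = S := by
    rw [← Matrix.conjTranspose_eq_transpose_of_trivial]
    exact hSsym0
  have hSS : S * S = Mᴴ * M := hSS0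
  have hSdet : IsUnit S.det := by
    have hdet : S.det * S.det = (Mᴴ * M).det := by rw [← Matrix.det_mul, hSS]
    have : IsUnit (S.det * S.det) := by
      rw [hdet, Matrix.det_mul, Matrix.conjTranspose_eq_transpose_of_trivial,
        Matrix.det_transpose]
      exact h.mul h
    exact isUnit_of_mul_isUnit_left this
  refine ⟨M * S⁻¹, S, ?_, hSsym, ?_⟩
  · have hMt : Mᴴ = Mᵀ := Matrix.conjTranspose_eq_transpose_of_trivial M
    calc (M * S⁻¹)ᵀ * (M * S⁻¹) = S⁻¹ᵀ * (Mᵀ * M) * S⁻¹ := by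
          rw [Matrix.transpose_mul]; simp only [Matrix.mul_assoc]
      _ = S⁻¹ * (S * S) * S⁻¹ := by
          rw [Matrix.transpose_nonsing_inv, hSsym, hSS, hMt]
      _ = (S⁻¹ * S) * (S * S⁻¹) := by simp only [Matrix.mul_assoc]
      _ = 1 := by rw [Matrix.nonsing_inv_mul S hSdet, Matrix.mul_nonsing_inv S hSdet,
          Matrix.one_mul]
  · rw [Matrix.mul_assoc, Matrix.nonsing_inv_mul S hSdet, Matrix.mul_one]

lemma eval_det_add_smul_one (M : Matrix (Fin n) (Fin n) ℝ) :
    {x : ℝ | (M + x • (1 : Matrix (Fin n) (Fin n) ℝ)).det = 0}.Finite := by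
  classical
  have key : ∀ x : ℝ, ((-M).charpoly).eval x = (M + x • (1 : Matrix (Fin n) (Fin n) ℝ)).det := by
    intro x
    rw [Matrix.charpoly, ← Polynomial.coe_evalRingHom, RingHom.map_det]
    congr 1
    ext i j
    by_cases hij : i = j <;>
      simp [hij, Matrix.charmatrix_apply, Matrix.map_apply, Matrix.add_apply,
        Matrix.smul_apply, Matrix.one_apply, Matrix.diagonal_apply, add_comm]
  have hne : (-M).charpoly ≠ 0 := ((-M).charpoly_monic).ne_zero
  have hsub : {x : ℝ | (M + x • (1 : Matrix (Fin n) (Fin n) ℝ)).det = 0}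
      ⊆ {x : ℝ | ((-M).charpoly).IsRoot x} := by
    intro x hx
    simp only [Set.mem_setOf_eq, Polynomial.IsRoot, key x]
    exact hx
  exact (Polynomial.finite_setOf_isRoot hne).subset hsub

lemma proper : ProperSpace (Matrix (Fin n) (Fin n) ℝ) := pi_properSpace

/-- Polar-type decomposition for arbitrary real square matrices. -/
lemma exists_polar (M : Matrix (Fin n) (Fin n) ℝ) :
    ∃ Q N : Matrix (Fin n) (Fin n) ℝ, Qᵀ * Q = 1 ∧ Nᵀ = N ∧ M = Q * N := by
  classical
  -- choose εₖ → 0 with M + εₖ • 1 invertible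
  have hchoice : ∀ k : ℕ, ∃ x : ℝ, x ∈ Set.Ioo (0:ℝ) (1/(k+1)) ∧
      IsUnit (M + x • (1 : Matrix (Fin n) (Fin n) ℝ)).det := by
    intro k
    have hpos : (0:ℝ) < 1/(k+1) := by positivity
    have hinf : (Set.Ioo (0:ℝ) (1/(k+1))).Infinite := Set.Ioo_infinite hpos
    have := (hinf.diff (eval_det_add_smul_one M)).nonempty
    obtain ⟨x, hx1, hx2⟩ := this
    refine ⟨x, hx1, ?_⟩
    simp only [Set.mem_setOf_eq] at hx2
    exact isUnit_iff_ne_zero.mpr hx2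
  choose ε hε1 hε2 using hchoice
  have hεto : Filter.Tendsto ε Filter.atTop (nhds 0) := by
    have h1 : Filter.Tendsto (fun k : ℕ => (0:ℝ)) Filter.atTop (nhds 0) := tendsto_const_nhds
    have h2 : Filter.Tendsto (fun k : ℕ => 1/((k:ℝ)+1)) Filter.atTop (nhds 0) :=
      tendsto_one_div_add_atTop_nhds_zero_nat
    exact tendsto_of_tendsto_of_tendsto_of_le_of_le h1 h2
      (fun k => (hε1 k).1.le) (fun k => (hε1 k).2.le)
  -- orthogonal factors
  have hQN : ∀ k : ℕ, ∃ Q N : Matrix (Fin n) (Fin n) ℝ, Qᵀ * Q = 1 ∧ Nᵀ = N ∧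
      M + ε k • 1 = Q * N :=
    fun k => exists_polar_invertible _ (hε2 k)
  choose Qs Ns hQs hNs hMQN using hQN
  -- compactness of the orthogonal set
  have : ProperSpace (Matrix (Fin n) (Fin n) ℝ) := proper
  have hKclosed : IsClosed {Q : Matrix (Fin n) (Fin n) ℝ | Qᵀ * Q = 1} :=
    isClosed_eq (continuous_id.matrix_transpose.matrix_mul continuous_id) continuous_const
  have hKbdd : Bornology.IsBounded {Q : Matrix (Fin n) (Fin n) ℝ | Qᵀ * Q = 1} := by
    rw [isBounded_iff_forall_norm_le]
    refine ⟨1, fun Q hQ => ?_⟩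
    rw [Matrix.norm_le_iff zero_le_one]
    intro i j
    rw [Real.norm_eq_abs, ← sq_le_one_iff_abs_le_one]
    have hdiag : ∑ k, Q k j ^ 2 = 1 := by
      have := congrFun (congrFun hQ j) j
      simpa [Matrix.mul_apply, Matrix.one_apply, sq] using this
    calc Q i j ^ 2 ≤ ∑ k, Q k j ^ 2 :=
          Finset.single_le_sum (fun k _ => sq_nonneg (Q k j)) (Finset.mem_univ i)
      _ = 1 := hdiag
  have hK : IsCompact {Q : Matrix (Fin n) (Fin n) ℝ | Qᵀ * Q = 1} :=
    Metric.isCompact_of_isClosed_isBounded hKclosed hKbdd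
  have : FirstCountableTopology (Matrix (Fin n) (Fin n) ℝ) :=
    inferInstanceAs (FirstCountableTopology (Fin n → Fin n → ℝ))
  obtain ⟨Q, hQmem, φ, hφ, hQto⟩ := hK.tendsto_subseq (fun k => (hQs k : _))
  refine ⟨Q, Qᵀ * M, hQmem, ?_, ?_⟩
  · -- Qᵀ * M is symmetric as a limit of symmetric matrices
    have hNk : ∀ k, (Qs k)ᵀ * (M + ε k • 1) = Ns k := by
      intro k
      rw [hMQN k, ← Matrix.mul_assoc, hQs k, Matrix.one_mul]
    have hεφ : Filter.Tendsto (fun k => ε (φ k)) Filter.atTop (nhds 0) :=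
      hεto.comp hφ.tendsto_atTop
    have h1 : Filter.Tendsto (fun k => (M + ε (φ k) • 1 : Matrix (Fin n) (Fin n) ℝ))
        Filter.atTop (nhds (M + (0:ℝ) • 1)) :=
      tendsto_const_nhds.add (hεφ.smul tendsto_const_nhds)
    have h2 : Filter.Tendsto (fun k => (Qs (φ k))ᵀ) Filter.atTop (nhds Qᵀ) :=
      ((continuous_id.matrix_transpose).tendsto Q).comp hQto
    have hten : Filter.Tendsto (fun k => (Qs (φ k))ᵀ * (M + ε (φ k) • 1))
        Filter.atTop (nhds (Qᵀ * M)) := by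
      have := h2.mul h1
      simpa using this
    have hSclosed : IsClosed {X : Matrix (Fin n) (Fin n) ℝ | Xᵀ = X} :=
      isClosed_eq continuous_id.matrix_transpose continuous_id
    have hmem := hSclosed.mem_of_tendsto hten (Filter.Eventually.of_forall (fun k => by
      show ((Qs (φ k))ᵀ * (M + ε (φ k) • 1))ᵀ = _
      rw [hNk (φ k)]
      exact hNs (φ k)))
    exact hmem
  · -- M = Q * (Qᵀ * M)
    rw [← Matrix.mul_assoc, mul_eq_one_comm.mp hQmem, Matrix.one_mul]

end Stmt1Aux

end Stmt1Aux

open Stmt1Aux in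
theorem stmt_1 (n : ℕ) (M : Matrix (Fin n) (Fin n) ℝ) :
    ∃ A : Matrix (Fin n) (Fin n) ℝ, IsUnit A.det ∧ M = A - (A⁻¹)ᵀ := by
  obtain ⟨Q, N, hQ, hN, hM⟩ := exists_polar M
  obtain ⟨B, hB, hBN⟩ := exists_sym N (by
    rw [Matrix.IsHermitian, Matrix.conjTranspose_eq_transpose_of_trivial]; exact hN)
  set A := Q * B with hA
  have key : Aᵀ * (A - M) = 1 := by
    have hsub : A - M = Q * (B - N) := by rw [hA, hM, Matrix.mul_sub]
    rw [hsub, hA, Matrix.transpose_mul, hB]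
    calc B * Qᵀ * (Q * (B - N)) = B * ((Qᵀ * Q) * (B - N)) := by
          simp only [Matrix.mul_assoc]
      _ = 1 := by rw [hQ, Matrix.one_mul, hBN]
  have hdet : IsUnit A.det := by
    have : Aᵀ.det * (A - M).det = 1 := by rw [← Matrix.det_mul, key, Matrix.det_one]
    have := IsUnit.of_mul_eq_one _ this
    rwa [Matrix.det_transpose] at this
  refine ⟨A, hdet, ?_⟩
  have hinv : Aᵀ⁻¹ = A - M := Matrix.inv_eq_right_inv key
  rw [Matrix.transpose_nonsing_inv, hinv]
  abel
end

section
/- For every real m×n matrix M, there exist a real m×n matrix A and a real n×m matrix B such that B is the Moore–Penrose pseudoinverse of A (i.e., A*B*A = A, B*A*B = B, (A*B)ᵀ = A*B, and (B*A)ᵀ = B*A), the rank of A equals the rank of M, and M = A - Bᵀ. -/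
open Matrix

noncomputable def pfun (l : ℝ) : ℝ :=
  if 0 < l then (Real.sqrt l + Real.sqrt (l + 4)) / (2 * Real.sqrt l) else 0

noncomputable def qfun (l : ℝ) : ℝ :=
  if 0 < l then 1 / (pfun l * l) else 0

lemma pfun_pos {l : ℝ} (hl : 0 < l) : 0 < pfun l := by
  rw [pfun, if_pos hl]
  have h1 : 0 < Real.sqrt l := Real.sqrt_pos.mpr hl
  have h2 : 0 < Real.sqrt (l + 4) := Real.sqrt_pos.mpr (by linarith)
  positivity

lemma pq_mul {l : ℝ} (hl : 0 < l) : pfun l * qfun l * l = 1 := by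
  rw [qfun, if_pos hl]
  have := pfun_pos hl
  field_simp

lemma p_sub_q {l : ℝ} (hl : 0 < l) : pfun l - qfun l = 1 := by
  have hp := pfun_pos hl
  have key : pfun l * pfun l * l - 1 = pfun l * l := by
    rw [pfun, if_pos hl]
    have ha : Real.sqrt l ^ 2 = l := Real.sq_sqrt hl.le
    have hb : Real.sqrt (l + 4) ^ 2 = l + 4 := Real.sq_sqrt (by linarith)
    have ha0 : 0 < Real.sqrt l := Real.sqrt_pos.mpr hl
    field_simp
    linear_combination l * hb - (l + 4) * ha
  rw [qfun, if_pos hl]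
  have hpl : pfun l * l ≠ 0 := by positivity
  field_simp
  linear_combination key

noncomputable def Fm {n : ℕ} (V : Matrix (Fin n) (Fin n) ℝ) (d : Fin n → ℝ) (φ : ℝ → ℝ) :
    Matrix (Fin n) (Fin n) ℝ := V * Matrix.diagonal (φ ∘ d) * star V

variable {n : ℕ} {V : Matrix (Fin n) (Fin n) ℝ}

lemma Fm_mul (hVV : star V * V = 1) (d : Fin n → ℝ) (φ ψ : ℝ → ℝ) :
    Fm V d φ * Fm V d ψ = Fm V d (φ * ψ) := by
  simp only [Fm]
  rw [show V * diagonal (φ ∘ d) * star V * (V * diagonal (ψ ∘ d) * star V)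
      = V * (diagonal (φ ∘ d) * ((star V * V) * diagonal (ψ ∘ d))) * star V by
    simp only [Matrix.mul_assoc]]
  rw [hVV, Matrix.one_mul, diagonal_mul_diagonal]
  rfl

lemma Fm_congr (d : Fin n → ℝ) (φ ψ : ℝ → ℝ) (h : ∀ i, φ (d i) = ψ (d i)) :
    Fm V d φ = Fm V d ψ := by
  simp only [Fm]
  congr 1
  congr 1
  exact congrArg _ (funext fun i => h i)

lemma Fm_transpose (d : Fin n → ℝ) (φ : ℝ → ℝ) : (Fm V d φ)ᵀ = Fm V d φ := by
  have hs : star V = Vᵀ := by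
    rw [Matrix.star_eq_conjTranspose, conjTranspose_eq_transpose_of_trivial]
  simp only [Fm, hs, Matrix.transpose_mul, Matrix.transpose_transpose, diagonal_transpose,
    Matrix.mul_assoc]

lemma Fm_one (hVV' : V * star V = 1) (d : Fin n → ℝ) : Fm V d (fun _ => 1) = 1 := by
  have : ((fun _ => (1:ℝ)) ∘ d) = fun _ => 1 := rfl
  rw [Fm, this, diagonal_one, Matrix.mul_one, hVV']

lemma Fm_zero (d : Fin n → ℝ) : Fm V d (fun _ => 0) = 0 := by
  have : ((fun _ => (0:ℝ)) ∘ d) = fun _ => 0 := rfl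
  rw [Fm, this, diagonal_zero, Matrix.mul_zero, Matrix.zero_mul]

lemma Fm_sub {n : ℕ} {V : Matrix (Fin n) (Fin n) ℝ} (d : Fin n → ℝ) (φ ψ : ℝ → ℝ) :
    Fm V d φ - Fm V d ψ = Fm V d (fun x => φ x - ψ x) := by
  simp only [Fm]
  rw [← Matrix.sub_mul, ← Matrix.mul_sub, diagonal_sub]
  rfl

lemma scalABA {l : ℝ} (hl : 0 ≤ l) : pfun l * qfun l * l * pfun l = pfun l := by
  rcases eq_or_lt_of_le hl with h | h
  · simp [pfun, qfun, ← h]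
  · linear_combination pfun l * pq_mul h

lemma scalBAB {l : ℝ} (hl : 0 ≤ l) : qfun l * l * pfun l * qfun l = qfun l := by
  rcases eq_or_lt_of_le hl with h | h
  · simp [pfun, qfun, ← h]
  · linear_combination qfun l * pq_mul h

theorem stmt_2 (m n : ℕ) (M : Matrix (Fin m) (Fin n) ℝ) :
    ∃ (A : Matrix (Fin m) (Fin n) ℝ) (B : Matrix (Fin n) (Fin m) ℝ),
      A * B * A = A ∧ B * A * B = B ∧ (A * B)ᵀ = A * B ∧ (B * A)ᵀ = B * A ∧
      A.rank = M.rank ∧ M = A - Bᵀ := by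
  classical
  have hPSD : (Mᴴ * M).PosSemidef := posSemidef_conjTranspose_mul_self M
  have hN : (Mᴴ * M).IsHermitian := hPSD.1
  set d : Fin n → ℝ := hN.eigenvalues with hd
  set V : Matrix (Fin n) (Fin n) ℝ := (hN.eigenvectorUnitary : Matrix (Fin n) (Fin n) ℝ) with hV
  have hVV : star V * V = 1 := mem_unitaryGroup_iff'.mp (hN.eigenvectorUnitary).2
  have hVV' : V * star V = 1 := mem_unitaryGroup_iff.mp (hN.eigenvectorUnitary).2
  have hdn : ∀ i, 0 ≤ d i := fun i => hPSD.eigenvalues_nonneg i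
  have hMH : Mᴴ = Mᵀ := conjTranspose_eq_transpose_of_trivial M
  have hFh : ∀ φ : ℝ → ℝ, (Fm V d φ)ᴴ = Fm V d φ := fun φ => by
    rw [conjTranspose_eq_transpose_of_trivial, Fm_transpose]
  have hspec : Mᵀ * M = Fm V d (fun x => x) := by
    rw [← hMH, Fm]
    have := hN.spectral_theorem
    rw [Unitary.conjStarAlgAut_apply] at this
    convert this using 3 <;> rfl
  have hkill : ∀ ψ : ℝ → ℝ, (∀ i, d i * ψ (d i) * ψ (d i) = 0) → M * Fm V d ψ = 0 := by
    intro ψ hψ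
    have h0 : (M * Fm V d ψ)ᴴ * (M * Fm V d ψ) = 0 := by
      rw [conjTranspose_mul, hFh, hMH,
        show Fm V d ψ * Mᵀ * (M * Fm V d ψ) = Fm V d ψ * (Mᵀ * M) * Fm V d ψ by
          simp only [Matrix.mul_assoc],
        hspec, Fm_mul hVV d _ _, Fm_mul hVV d _ _]
      rw [Fm_congr d _ (fun _ => 0) (fun i => by
        have := hψ i
        simp only [Pi.mul_apply]
        linarith [hψ i]), Fm_zero]
    exact conjTranspose_mul_self_eq_zero.mp h0
  refine ⟨M * Fm V d pfun, Fm V d qfun * Mᵀ, ?_, ?_, ?_, ?_, ?_, ?_⟩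
  · -- A * B * A = A
    rw [show M * Fm V d pfun * (Fm V d qfun * Mᵀ) * (M * Fm V d pfun)
        = M * (Fm V d pfun * Fm V d qfun * (Mᵀ * M) * Fm V d pfun) by
      simp only [Matrix.mul_assoc], hspec, Fm_mul hVV d _ _, Fm_mul hVV d _ _, Fm_mul hVV d _ _]
    rw [Fm_congr d _ pfun (fun i => by
      simp only [Pi.mul_apply]
      exact scalABA (hdn i))]
  · -- B * A * B = B
    rw [show Fm V d qfun * Mᵀ * (M * Fm V d pfun) * (Fm V d qfun * Mᵀ)
        = Fm V d qfun * (Mᵀ * M) * Fm V d pfun * Fm V d qfun * Mᵀ by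
      simp only [Matrix.mul_assoc], hspec, Fm_mul hVV d _ _, Fm_mul hVV d _ _, Fm_mul hVV d _ _]
    rw [Fm_congr d _ qfun (fun i => by
      simp only [Pi.mul_apply]
      exact scalBAB (hdn i))]
  · -- (A*B)ᵀ = A*B
    rw [show M * Fm V d pfun * (Fm V d qfun * Mᵀ) = M * (Fm V d pfun * Fm V d qfun) * Mᵀ by
      simp only [Matrix.mul_assoc], Fm_mul hVV d _ _]
    rw [Matrix.transpose_mul, Matrix.transpose_mul, Matrix.transpose_transpose,
      Fm_transpose d _, Matrix.mul_assoc]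
  · -- (B*A)ᵀ = B*A
    rw [show Fm V d qfun * Mᵀ * (M * Fm V d pfun) = Fm V d qfun * (Mᵀ * M) * Fm V d pfun by
      simp only [Matrix.mul_assoc], hspec, Fm_mul hVV d _ _, Fm_mul hVV d _ _]
    rw [Fm_transpose d _]
  · -- rank
    refine le_antisymm (rank_mul_le_left M (Fm V d pfun)) ?_
    set r : ℝ → ℝ := fun l => if 0 < l then 1 / pfun l else 0 with hr
    have hMA : M = M * Fm V d pfun * Fm V d r := by
      rw [Matrix.mul_assoc, Fm_mul hVV d _ _]
      have hz : M * Fm V d (fun x => 1 - (pfun * r) x) = 0 := by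
        refine hkill _ (fun i => ?_)
        rcases eq_or_lt_of_le (hdn i) with h | h
        · rw [← h]; ring
        · have hp := pfun_pos h
          simp only [hr, Pi.mul_apply, if_pos h]
          field_simp
          ring
      have := Fm_sub (V := V) d (fun _ => 1) (pfun * r)
      rw [Fm_one hVV'] at this
      have h2 : M * (1 - Fm V d (pfun * r)) = 0 := by
        rw [this]; exact hz
      rw [Matrix.mul_sub, Matrix.mul_one, sub_eq_zero] at h2
      exact h2
    conv_lhs => rw [hMA]
    exact rank_mul_le_left _ _
  · -- M = A - Bᵀ
    rw [Matrix.transpose_mul, Matrix.transpose_transpose, Fm_transpose d _]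
    have hz : M * Fm V d (fun x => 1 - (pfun x - qfun x)) = 0 := by
      refine hkill _ (fun i => ?_)
      rcases eq_or_lt_of_le (hdn i) with h | h
      · rw [← h]; ring
      · rw [p_sub_q h]; ring
    have e1 : Fm V d (fun x => 1 - (pfun x - qfun x))
        = 1 - (Fm V d pfun - Fm V d qfun) := by
      rw [Fm_sub d pfun qfun, ← Fm_one hVV' (d := d), Fm_sub]
    rw [e1, Matrix.mul_sub, Matrix.mul_one, sub_eq_zero, Matrix.mul_sub] at hz
    exact hz
end

section
/- For every invertible complex n×n matrix M, there exists an invertible complex n×n matrix A such that M = A - (A⁻¹)ᴴ, where (A⁻¹)ᴴ denotes the conjugate transpose of the inverse of A. -/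
/-!
Put `A = M * B` with `B` self-adjoint. If `A⁻¹ = (B - 1) * Mᴴ`, then
`(A⁻¹)ᴴ = M * (B - 1) = A - M`; and `A⁻¹ = (B - 1) * Mᴴ` holds as soon as
`B * B - B = M⁻¹ * (M⁻¹)ᴴ`. The right-hand side is positive semidefinite, so such a `B` is
obtained by applying the larger root `x ↦ (1 + √(1 + 4x)) / 2` of `t ^ 2 - t = x` to it through
the continuous functional calculus.
-/

open Matrix ComplexOrder
open scoped MatrixOrder

theorem exists_isSelfAdjoint_mul_self_sub_eq {A : Type*} [Ring A] [StarRing A] [Algebra ℝ A]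
    [TopologicalSpace A] [ContinuousFunctionalCalculus ℝ A IsSelfAdjoint] {a : A}
    (ha : IsSelfAdjoint a) (hspec : ∀ x ∈ spectrum ℝ a, -(1 / 4) ≤ x) :
    ∃ b : A, IsSelfAdjoint b ∧ b * b - b = a := by
  let root : ℝ → ℝ := fun x ↦ (1 + √(1 + 4 * x)) / 2
  refine ⟨cfc root a, cfc_predicate root a, ?_⟩
  calc cfc root a * cfc root a - cfc root a = cfc (fun x ↦ root x * root x - root x) a := by
        rw [cfc_sub .., cfc_mul ..]
    _ = cfc id a := cfc_congr fun x hx ↦ by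
        have := Real.sq_sqrt (show 0 ≤ 1 + 4 * x by linarith [hspec x hx])
        simp only [root, id]
        nlinarith
    _ = a := cfc_id' ℝ a

theorem Matrix.isUnit_det_mul_and_eq_mul_sub_conjTranspose_inv {n R : Type*} [Fintype n]
    [DecidableEq n] [CommRing R] [StarRing R] {M B : Matrix n n R} (hB : Bᴴ = B)
    (h : M * (B * B - B) * Mᴴ = 1) :
    IsUnit (M * B).det ∧ M = M * B - ((M * B)⁻¹)ᴴ := by
  have hinv : M * B * ((B - 1) * Mᴴ) = 1 :=
    calc M * B * ((B - 1) * Mᴴ) = M * (B * B - B) * Mᴴ := by noncomm_ring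
      _ = 1 := h
  refine ⟨isUnit_det_of_right_inverse hinv, ?_⟩
  rw [inv_eq_right_inv hinv, conjTranspose_mul, conjTranspose_conjTranspose, conjTranspose_sub,
    hB, conjTranspose_one]
  noncomm_ring

theorem stmt_3 (n : ℕ) (M : Matrix (Fin n) (Fin n) ℂ) (hM : IsUnit M.det) :
    ∃ A : Matrix (Fin n) (Fin n) ℂ, IsUnit A.det ∧ M = A - (A⁻¹)ᴴ := by
  have hP : (M⁻¹ * (M⁻¹)ᴴ).PosSemidef := posSemidef_self_mul_conjTranspose M⁻¹
  obtain ⟨B, hB, hBB⟩ := exists_isSelfAdjoint_mul_self_sub_eq hP.1.isSelfAdjoint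
    fun x hx ↦ by linarith [spectrum_nonneg_of_nonneg hP.nonneg hx]
  refine ⟨M * B, isUnit_det_mul_and_eq_mul_sub_conjTranspose_inv hB ?_⟩
  rw [hBB, ← Matrix.mul_assoc, mul_nonsing_inv M hM, Matrix.one_mul, ← conjTranspose_mul,
    mul_nonsing_inv M hM, conjTranspose_one]
end

section
/- For every complex n×n matrix M (not necessarily invertible), there exists an invertible complex n×n matrix A such that M = A - (A⁻¹)ᴴ, where (A⁻¹)ᴴ denotes the conjugate transpose of the inverse of A. -/
open Matrix
open ComplexOrder

noncomputable section

set_option maxHeartbeats 1000000 in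
set_option synthInstance.maxHeartbeats 200000 in
lemma polar_aux {n : ℕ} (M P : Matrix (Fin n) (Fin n) ℂ)
    (hP : Pᴴ * P = Mᴴ * M) :
    ∃ U : Matrix (Fin n) (Fin n) ℂ, Uᴴ * U = 1 ∧ U * Uᴴ = 1 ∧ M = U * P := by
  classical
  let T : EuclideanSpace ℂ (Fin n) →L[ℂ] EuclideanSpace ℂ (Fin n) :=
    Matrix.toEuclideanCLM (𝕜 := ℂ) M
  let S : EuclideanSpace ℂ (Fin n) →L[ℂ] EuclideanSpace ℂ (Fin n) :=
    Matrix.toEuclideanCLM (𝕜 := ℂ) P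
  have hstar : star S * S = star T * T := by
    have h1 : star S * S = Matrix.toEuclideanCLM (𝕜 := ℂ) (Pᴴ * P) := by
      rw [_root_.map_mul, ← Matrix.star_eq_conjTranspose, map_star]
    have h2 : star T * T = Matrix.toEuclideanCLM (𝕜 := ℂ) (Mᴴ * M) := by
      rw [_root_.map_mul, ← Matrix.star_eq_conjTranspose, map_star]
    rw [h1, h2, hP]
  have key : ∀ (R : EuclideanSpace ℂ (Fin n) →L[ℂ] EuclideanSpace ℂ (Fin n))
      (x : EuclideanSpace ℂ (Fin n)),
      (inner ℂ ((star R * R) x) x : ℂ) = inner ℂ (R x) (R x) := by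
    intro R x
    rw [ContinuousLinearMap.mul_apply, ContinuousLinearMap.star_eq_adjoint,
      ContinuousLinearMap.adjoint_inner_left]
  have hnorm : ∀ x : EuclideanSpace ℂ (Fin n), ‖T x‖ = ‖S x‖ := by
    intro x
    have h2 : (inner ℂ (T x) (T x) : ℂ) = inner ℂ (S x) (S x) := by
      rw [← key T x, ← key S x, hstar]
    have h4 : ‖T x‖ ^ 2 = ‖S x‖ ^ 2 := by
      rw [norm_sq_eq_re_inner (𝕜 := ℂ), norm_sq_eq_re_inner (𝕜 := ℂ), h2]
    nlinarith [norm_nonneg (T x), norm_nonneg (S x)]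
  set S' : EuclideanSpace ℂ (Fin n) →ₗ[ℂ] EuclideanSpace ℂ (Fin n) :=
    (S : EuclideanSpace ℂ (Fin n) →ₗ[ℂ] EuclideanSpace ℂ (Fin n)) with hS'
  set T' : EuclideanSpace ℂ (Fin n) →ₗ[ℂ] EuclideanSpace ℂ (Fin n) :=
    (T : EuclideanSpace ℂ (Fin n) →ₗ[ℂ] EuclideanSpace ℂ (Fin n)) with hT'
  have hker : LinearMap.ker S' ≤ LinearMap.ker T' := by
    intro x hx
    rw [LinearMap.mem_ker] at hx ⊢
    have hx' : S x = 0 := hx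
    have : ‖T x‖ = 0 := by rw [hnorm x, hx', norm_zero]
    exact norm_eq_zero.mp this
  let L₀ : ↥(LinearMap.range S') →ₗ[ℂ] EuclideanSpace ℂ (Fin n) :=
    (Submodule.liftQ (LinearMap.ker S') T' hker).comp
      (S'.quotKerEquivRange.symm :
        ↥(LinearMap.range S') →ₗ[ℂ] EuclideanSpace ℂ (Fin n) ⧸ LinearMap.ker S')
  have hL₀ : ∀ x : EuclideanSpace ℂ (Fin n),
      L₀ ⟨S' x, LinearMap.mem_range_self S' x⟩ = T' x := by
    intro x
    simp only [L₀, LinearMap.coe_comp, Function.comp_apply, LinearEquiv.coe_coe]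
    rw [LinearMap.quotKerEquivRange_symm_apply_image, Submodule.mkQ_apply,
      Submodule.liftQ_apply]
  let L : ↥(LinearMap.range S') →ₗᵢ[ℂ] EuclideanSpace ℂ (Fin n) :=
    { toLinearMap := L₀
      norm_map' := by
        rintro ⟨v, hv⟩
        obtain ⟨x, rfl⟩ := hv
        have h1 : ‖(⟨S' x, LinearMap.mem_range_self S' x⟩ : ↥(LinearMap.range S'))‖
            = ‖S x‖ := rfl
        rw [hL₀ x, h1]
        exact hnorm x }
  let U' : EuclideanSpace ℂ (Fin n) →ₗᵢ[ℂ] EuclideanSpace ℂ (Fin n) := L.extend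
  have hU' : ∀ x : EuclideanSpace ℂ (Fin n), U' (S x) = T x := by
    intro x
    have h1 := L.extend_apply ⟨S' x, LinearMap.mem_range_self S' x⟩
    have h2 : L ⟨S' x, LinearMap.mem_range_self S' x⟩ = T' x := hL₀ x
    rw [h2] at h1
    exact h1
  let Ue : EuclideanSpace ℂ (Fin n) ≃ₗᵢ[ℂ] EuclideanSpace ℂ (Fin n) :=
    U'.toLinearIsometryEquiv rfl
  have hUe : ∀ x : EuclideanSpace ℂ (Fin n), Ue x = U' x := fun x => rfl
  let u : unitary (EuclideanSpace ℂ (Fin n) →L[ℂ] EuclideanSpace ℂ (Fin n)) :=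
    Unitary.linearIsometryEquiv.symm Ue
  have hu : (u : EuclideanSpace ℂ (Fin n) →L[ℂ] EuclideanSpace ℂ (Fin n)) =
      (Ue : EuclideanSpace ℂ (Fin n) →L[ℂ] EuclideanSpace ℂ (Fin n)) := rfl
  refine ⟨(Matrix.toEuclideanCLM (𝕜 := ℂ)).symm
      (u : EuclideanSpace ℂ (Fin n) →L[ℂ] EuclideanSpace ℂ (Fin n)), ?_, ?_, ?_⟩
  · rw [← Matrix.star_eq_conjTranspose,
      ← map_star (Matrix.toEuclideanCLM (𝕜 := ℂ)).symm,
      ← _root_.map_mul (Matrix.toEuclideanCLM (𝕜 := ℂ)).symm,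
      Unitary.star_mul_self_of_mem u.prop, _root_.map_one]
  · rw [← Matrix.star_eq_conjTranspose,
      ← map_star (Matrix.toEuclideanCLM (𝕜 := ℂ)).symm,
      ← _root_.map_mul (Matrix.toEuclideanCLM (𝕜 := ℂ)).symm,
      Unitary.mul_star_self_of_mem u.prop, _root_.map_one]
  · have hTS : T = (u : EuclideanSpace ℂ (Fin n) →L[ℂ] EuclideanSpace ℂ (Fin n)) * S := by
      refine ContinuousLinearMap.ext fun x => ?_
      rw [ContinuousLinearMap.mul_apply]
      show T x = ((u : EuclideanSpace ℂ (Fin n) →L[ℂ] EuclideanSpace ℂ (Fin n))) (S x)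
      rw [hu]
      show T x = Ue (S x)
      rw [hUe, hU' x]
    calc M = (Matrix.toEuclideanCLM (𝕜 := ℂ)).symm T :=
            ((Matrix.toEuclideanCLM (𝕜 := ℂ)).symm_apply_apply M).symm
      _ = (Matrix.toEuclideanCLM (𝕜 := ℂ)).symm
            ((u : EuclideanSpace ℂ (Fin n) →L[ℂ] EuclideanSpace ℂ (Fin n)) * S) := by
            rw [hTS]
      _ = (Matrix.toEuclideanCLM (𝕜 := ℂ)).symm
            (u : EuclideanSpace ℂ (Fin n) →L[ℂ] EuclideanSpace ℂ (Fin n)) *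
          (Matrix.toEuclideanCLM (𝕜 := ℂ)).symm S := by
            rw [_root_.map_mul]
      _ = _ := by rw [(Matrix.toEuclideanCLM (𝕜 := ℂ)).symm_apply_apply P]

end


noncomputable section

lemma conj_mul_conj {n : ℕ} (W X Y : Matrix (Fin n) (Fin n) ℂ) (h : Wᴴ * W = 1) :
    (W * X * Wᴴ) * (W * Y * Wᴴ) = W * (X * Y) * Wᴴ := by
  simp only [← Matrix.mul_assoc]
  rw [Matrix.mul_assoc (W * X) Wᴴ W, h, Matrix.mul_one]

end

open scoped MatrixOrder

theorem stmt_4 (n : ℕ) (M : Matrix (Fin n) (Fin n) ℂ) :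
    ∃ A : Matrix (Fin n) (Fin n) ℂ, IsUnit A.det ∧ M = A - (A⁻¹)ᴴ := by
  classical
  have hMM : (Mᴴ * M).PosSemidef := Matrix.posSemidef_conjTranspose_mul_self M
  set P : Matrix (Fin n) (Fin n) ℂ := CFC.sqrt (Mᴴ * M) with hPdef
  have hPsd : P.PosSemidef := (CFC.sqrt_nonneg (Mᴴ * M)).posSemidef
  have hPH : P.IsHermitian := hPsd.1
  have hPP : Pᴴ * P = Mᴴ * M := by
    rw [hPH.eq, CFC.sqrt_mul_sqrt_self (Mᴴ * M) hMM.nonneg]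
  obtain ⟨U, hU1, hU2, hM⟩ := polar_aux M P hPP
  set W : Matrix (Fin n) (Fin n) ℂ := ↑(Matrix.IsHermitian.eigenvectorUnitary hPH) with hWdef
  set lam : Fin n → ℝ := hPH.eigenvalues with hlam
  have hW1 : Wᴴ * W = 1 := by
    rw [← Matrix.star_eq_conjTranspose]
    exact Unitary.star_mul_self_of_mem (Matrix.IsHermitian.eigenvectorUnitary hPH).2
  have hW2 : W * Wᴴ = 1 := by
    rw [← Matrix.star_eq_conjTranspose]
    exact Unitary.mul_star_self_of_mem (Matrix.IsHermitian.eigenvectorUnitary hPH).2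
  set g : ℝ → ℝ := fun x => (x + Real.sqrt (x ^ 2 + 4)) / 2 with hg
  set c : ℝ → ℝ := fun x => (Real.sqrt (x ^ 2 + 4) - x) / 2 with hc
  have hgc : ∀ x : ℝ, g x * c x = 1 := by
    intro x
    have h4 : (0 : ℝ) ≤ x ^ 2 + 4 := by positivity
    have hs := Real.sq_sqrt h4
    simp only [hg, hc]
    nlinarith [hs]
  have hgd : ∀ x : ℝ, g x - c x = x := by
    intro x
    simp only [hg, hc]
    ring
  set D : Matrix (Fin n) (Fin n) ℂ :=
    Matrix.diagonal (fun i => (RCLike.ofReal (g (lam i)) : ℂ)) with hD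
  set Dc : Matrix (Fin n) (Fin n) ℂ :=
    Matrix.diagonal (fun i => (RCLike.ofReal (c (lam i)) : ℂ)) with hDc
  set B : Matrix (Fin n) (Fin n) ℂ := W * D * Wᴴ with hB
  set C : Matrix (Fin n) (Fin n) ℂ := W * Dc * Wᴴ with hC
  have hDDc : D * Dc = 1 := by
    rw [hD, hDc, Matrix.diagonal_mul_diagonal]
    convert Matrix.diagonal_one with i
    rw [← RCLike.ofReal_mul, hgc]
    simp
  have hDcD : Dc * D = 1 := by
    rw [hD, hDc, Matrix.diagonal_mul_diagonal]
    convert Matrix.diagonal_one with i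
    rw [← RCLike.ofReal_mul, mul_comm, hgc]
    simp
  have hBC : B * C = 1 := by
    rw [hB, hC, conj_mul_conj W D Dc hW1, hDDc, Matrix.mul_one, hW2]
  have hCB : C * B = 1 := by
    rw [hB, hC, conj_mul_conj W Dc D hW1, hDcD, Matrix.mul_one, hW2]
  have hBmC : B - C = P := by
    rw [hB, hC, ← Matrix.sub_mul, ← Matrix.mul_sub, Matrix.diagonal_sub]
    have hdiag : (Matrix.diagonal fun i =>
        (RCLike.ofReal (g (lam i)) : ℂ) - RCLike.ofReal (c (lam i))) =
        Matrix.diagonal (RCLike.ofReal ∘ lam) := by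
      refine congrArg Matrix.diagonal ?_
      funext i
      rw [← RCLike.ofReal_sub, hgd]
      rfl
    rw [hdiag, ← Matrix.star_eq_conjTranspose]
    exact hPH.spectral_theorem.symm
  have hCH : Cᴴ = C := by
    rw [hC, Matrix.conjTranspose_mul, Matrix.conjTranspose_mul,
      Matrix.conjTranspose_conjTranspose, Matrix.diagonal_conjTranspose]
    have : star (fun i => (RCLike.ofReal (c (lam i)) : ℂ)) =
        fun i => (RCLike.ofReal (c (lam i)) : ℂ) := by
      funext i
      simp [Pi.star_apply, RCLike.star_def, RCLike.conj_ofReal]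
    rw [this, Matrix.mul_assoc]
  have hA1 : (U * B) * (C * Uᴴ) = 1 := by
    have h : (U * B) * (C * Uᴴ) = U * (B * C) * Uᴴ := by simp only [Matrix.mul_assoc]
    rw [h, hBC, Matrix.mul_one, hU2]
  refine ⟨U * B, Matrix.isUnit_det_of_right_inverse hA1, ?_⟩
  rw [Matrix.inv_eq_right_inv hA1, Matrix.conjTranspose_mul,
    Matrix.conjTranspose_conjTranspose, hCH, ← Matrix.mul_sub, hBmC]
  exact hM
end

section
/- Let M be an invertible real n×n matrix such that ‖M x‖ ≥ 2‖x‖ for every vector x ∈ ℝⁿ (i.e., every singular value of M is at least 2). Then there exists an invertible real n×n matrix A such that M = A + (A⁻¹)ᵀ. -/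
open Matrix

theorem stmt_9 (n : ℕ) (M : Matrix (Fin n) (Fin n) ℝ) (hM : IsUnit M.det)
    (h : ∀ x : EuclideanSpace ℝ (Fin n), 2 * ‖x‖ ≤ ‖Matrix.toEuclideanLin M x‖) :
    ∃ A : Matrix (Fin n) (Fin n) ℝ, IsUnit A.det ∧ M = A + (A⁻¹)ᵀ := by
  -- Step 1: the transpose of the inverse is a contraction by factor 1/2:
  -- ∀ x, 4 * ‖(M⁻¹)ᵀ x‖² ≤ ‖x‖².
  have hbound : ∀ x : Fin n → ℝ,
      4 * (((M⁻¹)ᵀ *ᵥ x) ⬝ᵥ ((M⁻¹)ᵀ *ᵥ x)) ≤ x ⬝ᵥ x := by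
    have hg : ∀ z : EuclideanSpace ℝ (Fin n),
        2 * ‖Matrix.toEuclideanLin M⁻¹ z‖ ≤ ‖z‖ := by
      intro z
      have := h (Matrix.toEuclideanLin M⁻¹ z)
      have hfg : Matrix.toEuclideanLin M (Matrix.toEuclideanLin M⁻¹ z) = z := by
        simp [Matrix.toEuclideanLin_apply, Matrix.mulVec_mulVec, Matrix.mul_nonsing_inv _ hM]
      rwa [hfg] at this
    have hadj : Matrix.toEuclideanLin M⁻¹
        = LinearMap.adjoint (Matrix.toEuclideanLin (M⁻¹)ᵀ) := by
      rw [← Matrix.toEuclideanLin_conjTranspose_eq_adjoint]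
      congr 1
    have hb : ∀ x : EuclideanSpace ℝ (Fin n),
        2 * ‖Matrix.toEuclideanLin (M⁻¹)ᵀ x‖ ≤ ‖x‖ := by
      intro x
      set b := Matrix.toEuclideanLin (M⁻¹)ᵀ with hbdef
      have key : ‖b x‖ ^ 2 = (inner ℝ (Matrix.toEuclideanLin M⁻¹ (b x)) x : ℝ) := by
        rw [hadj, LinearMap.adjoint_inner_left, real_inner_self_eq_norm_sq]
      have h2 : (inner ℝ (Matrix.toEuclideanLin M⁻¹ (b x)) x : ℝ)
          ≤ ‖Matrix.toEuclideanLin M⁻¹ (b x)‖ * ‖x‖ := real_inner_le_norm _ _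
      have h3 := hg (b x)
      nlinarith [norm_nonneg (b x), norm_nonneg x,
        norm_nonneg (Matrix.toEuclideanLin M⁻¹ (b x))]
    have norm_sq : ∀ v : Fin n → ℝ, ‖(WithLp.equiv 2 (Fin n → ℝ)).symm v‖ ^ 2 = v ⬝ᵥ v := by
      intro v
      rw [← real_inner_self_eq_norm_sq]
      simp [PiLp.inner_apply, dotProduct]
      rw [EuclideanSpace.norm_sq_eq]; simp [sq]
    intro x
    have h1 := hb ((WithLp.equiv 2 (Fin n → ℝ)).symm x)
    change 2 * ‖(WithLp.equiv 2 (Fin n → ℝ)).symm ((M⁻¹)ᵀ *ᵥ x)‖ ≤ _ at h1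
    have h2 := norm_sq x
    have h3 := norm_sq ((M⁻¹)ᵀ *ᵥ x)
    nlinarith [norm_nonneg ((WithLp.equiv 2 (Fin n → ℝ)).symm x),
      norm_nonneg ((WithLp.equiv 2 (Fin n → ℝ)).symm ((M⁻¹)ᵀ *ᵥ x))]
  -- Step 2: algebraic construction.  Let P = MᵀM, Q = 1 - 4P⁻¹ (PSD by step 1),
  -- R = √Q, C = ½(1+R), A = M*C.  Then P*C + C⁻¹ = P gives M = A + (A⁻¹)ᵀ.
  have hermT : ∀ {X : Matrix (Fin n) (Fin n) ℝ}, X.IsHermitian → Xᵀ = X := by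
    intro X hX
    rw [← Matrix.conjTranspose_eq_transpose_of_trivial]
    exact hX
  set P : Matrix (Fin n) (Fin n) ℝ := Mᵀ * M with hPdef
  have hMT : IsUnit Mᵀ.det := by rwa [Matrix.det_transpose]
  have hPunit : IsUnit P.det := by rw [hPdef, Matrix.det_mul]; exact hMT.mul hM
  have hPinv_eq : P⁻¹ = M⁻¹ * (M⁻¹)ᵀ := by
    rw [hPdef, Matrix.mul_inv_rev, Matrix.transpose_nonsing_inv]
  have hPherm : P.IsHermitian := by
    show Pᴴ = P
    rw [Matrix.conjTranspose_eq_transpose_of_trivial, hPdef, Matrix.transpose_mul,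
      Matrix.transpose_transpose]
  have hPinvHerm : P⁻¹.IsHermitian := hPherm.inv
  set Q : Matrix (Fin n) (Fin n) ℝ := 1 - (4:ℝ) • P⁻¹ with hQdef
  have hQ : Q.PosSemidef := by
    rw [Matrix.posSemidef_iff_dotProduct_mulVec]
    constructor
    · show Qᴴ = Q
      rw [Matrix.conjTranspose_eq_transpose_of_trivial, hQdef, Matrix.transpose_sub,
        Matrix.transpose_one, Matrix.transpose_smul, hermT hPinvHerm]
    · intro x
      have hq : star x = x := by simp
      rw [hQdef, Matrix.sub_mulVec, dotProduct_sub, hq]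
      have h1 : x ⬝ᵥ (1 : Matrix (Fin n) (Fin n) ℝ) *ᵥ x = x ⬝ᵥ x := by
        rw [Matrix.one_mulVec]
      have h2 : x ⬝ᵥ ((4:ℝ) • P⁻¹) *ᵥ x = 4 * (((M⁻¹)ᵀ *ᵥ x) ⬝ᵥ ((M⁻¹)ᵀ *ᵥ x)) := by
        rw [Matrix.smul_mulVec, dotProduct_smul, hPinv_eq, ← Matrix.mulVec_mulVec,
          smul_eq_mul]
        congr 1
        rw [Matrix.dotProduct_mulVec, ← Matrix.mulVec_transpose]
      rw [h1, h2]
      have := hbound x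
      linarith
  obtain ⟨R, hRR, hRps⟩ : ∃ R : Matrix (Fin n) (Fin n) ℝ, R * R = Q ∧ R.PosSemidef := by
    open scoped MatrixOrder in
    exact ⟨CFC.sqrt Q, CFC.sqrt_mul_sqrt_self Q hQ.nonneg, (CFC.sqrt_nonneg Q).posSemidef⟩
  have hD : (1 + R).PosDef := Matrix.PosDef.add_posSemidef Matrix.PosDef.one hRps
  set C : Matrix (Fin n) (Fin n) ℝ := (2:ℝ)⁻¹ • (1 + R) with hCdef
  have hCsym : Cᵀ = C := by
    rw [hCdef, Matrix.transpose_smul, hermT hD.isHermitian]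
  have hCunit : IsUnit C.det := by
    rw [hCdef, Matrix.det_smul]
    exact (IsUnit.pow _ (isUnit_iff_ne_zero.mpr (by norm_num))).mul hD.det_pos.ne'.isUnit
  have hCC : C * C⁻¹ = 1 := Matrix.mul_nonsing_inv _ hCunit
  have hkey : C * C = C - P⁻¹ := by
    have hexp1 : (1 + R) * (1 + R) = 1 + R + R + R * R := by noncomm_ring
    have hexp : (1 + R) * (1 + R) = (2:ℝ) • (1 + R) - (4:ℝ) • P⁻¹ := by
      rw [hexp1, hRR, hQdef]
      module
    rw [hCdef, Matrix.smul_mul, Matrix.mul_smul, hexp]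
    module
  have hPC : P * C + C⁻¹ = P := by
    have h1 : C * C * C⁻¹ = C := by rw [Matrix.mul_assoc, hCC, Matrix.mul_one]
    have e2 : C = 1 - P⁻¹ * C⁻¹ := by
      calc C = C * C * C⁻¹ := h1.symm
        _ = (C - P⁻¹) * C⁻¹ := by rw [hkey]
        _ = 1 - P⁻¹ * C⁻¹ := by rw [Matrix.sub_mul, hCC]
    have h4 : P * C = P - C⁻¹ := by
      conv_lhs => rw [e2]
      rw [Matrix.mul_sub, Matrix.mul_one, ← Matrix.mul_assoc,
        Matrix.mul_nonsing_inv _ hPunit, Matrix.one_mul]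
    rw [h4]
    abel
  have hCinvsym : (C⁻¹)ᵀ = C⁻¹ := by rw [Matrix.transpose_nonsing_inv, hCsym]
  refine ⟨M * C, ?_, ?_⟩
  · rw [Matrix.det_mul]; exact hM.mul hCunit
  · rw [Matrix.mul_inv_rev, Matrix.transpose_mul, hCinvsym]
    have cancel : Mᵀ * M = Mᵀ * (M * C + (M⁻¹)ᵀ * C⁻¹) := by
      rw [Matrix.mul_add, ← Matrix.mul_assoc, ← hPdef, ← Matrix.mul_assoc,
        Matrix.transpose_nonsing_inv, Matrix.mul_nonsing_inv _ hMT, Matrix.one_mul, hPC]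
    have h5 := congrArg (fun X => (Mᵀ)⁻¹ * X) cancel
    simp only [← Matrix.mul_assoc] at h5
    rwa [Matrix.nonsing_inv_mul _ hMT, Matrix.one_mul, Matrix.one_mul] at h5
end

section
/- For every invertible real n×n matrix M, there exist a real number c > 0 and an invertible real n×n matrix A such that M = c • (A + (A⁻¹)ᵀ). -/
open Matrix

theorem stmt_10 (n : ℕ) (M : Matrix (Fin n) (Fin n) ℝ) (hM : IsUnit M.det) :
    ∃ (c : ℝ) (A : Matrix (Fin n) (Fin n) ℝ),
      0 < c ∧ IsUnit A.det ∧ M = c • (A + (A⁻¹)ᵀ) := by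
  classical
  have hMT : IsUnit Mᵀ.det := by rwa [det_transpose]
  set S : Matrix (Fin n) (Fin n) ℝ := Mᴴ * M with hSdef
  have hSH : S.IsHermitian := isHermitian_conjTranspose_mul_self M
  set s : Fin n → ℝ := hSH.eigenvalues with hsdef
  have hMHdet : Mᴴ.det = M.det := by
    rw [conjTranspose_eq_transpose_of_trivial, det_transpose]
  have hdetS : S.det ≠ 0 := by
    rw [hSdef, det_mul, hMHdet]
    exact (hM.mul hM).ne_zero
  have hprod : (∏ i, s i) ≠ 0 := by
    have h := hSH.det_eq_prod_eigenvalues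
    simp only [RCLike.ofReal_real_eq_id, id] at h
    rw [← hsdef] at h
    rwa [h] at hdetS
  have hs : ∀ i, 0 < s i := by
    intro i
    have hne : s i ≠ 0 := fun h0 => hprod (Finset.prod_eq_zero (Finset.mem_univ i) h0)
    have hnn : 0 ≤ s i := (posSemidef_conjTranspose_mul_self M).eigenvalues_nonneg i
    exact lt_of_le_of_ne hnn (Ne.symm hne)
  -- choose a lower bound for eigenvalues
  obtain ⟨m, hm0, hms⟩ : ∃ m : ℝ, 0 < m ∧ ∀ i, m ≤ s i := by
    rcases isEmpty_or_nonempty (Fin n) with h | h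
    · exact ⟨1, one_pos, fun i => (h.false i).elim⟩
    · obtain ⟨i0, hi0⟩ := Finite.exists_min s
      exact ⟨s i0, hs i0, hi0⟩
  set c : ℝ := Real.sqrt m / 2 with hcdef
  have hc0 : 0 < c := by positivity
  have hc2 : ∀ i, 4 * c ^ 2 ≤ s i := by
    intro i
    have : c ^ 2 = m / 4 := by
      rw [hcdef, div_pow, Real.sq_sqrt hm0.le]; norm_num
    rw [this]
    linarith [hms i]
  have hdisc : ∀ i, 0 ≤ 1 / c ^ 2 - 4 / s i := by
    intro i
    have h1 : 4 / s i ≤ 1 / c ^ 2 := by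
      rw [div_le_div_iff₀ (hs i) (by positivity)]
      linarith [hc2 i]
    linarith
  set b : Fin n → ℝ := fun i => (1 / c + Real.sqrt (1 / c ^ 2 - 4 / s i)) / 2 with hbdef
  have hb0 : ∀ i, 0 < b i := by
    intro i
    have h1 : 0 ≤ Real.sqrt (1 / c ^ 2 - 4 / s i) := Real.sqrt_nonneg _
    have h2 : 0 < 1 / c := by positivity
    show 0 < (1 / c + Real.sqrt (1 / c ^ 2 - 4 / s i)) / 2
    positivity
  -- key scalar identity
  have hkey : ∀ i, s i * b i + (b i)⁻¹ = c⁻¹ * s i := by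
    intro i
    set d : ℝ := Real.sqrt (1 / c ^ 2 - 4 / s i) with hddef
    have hd2 : d ^ 2 = 1 / c ^ 2 - 4 / s i := Real.sq_sqrt (hdisc i)
    have hbi : b i = (1 / c + d) / 2 := rfl
    have hbne : b i ≠ 0 := (hb0 i).ne'
    have hsne : s i ≠ 0 := (hs i).ne'
    have hcne : c ≠ 0 := hc0.ne'
    have hsd : s i * (d ^ 2 - (1 / c) ^ 2) = -4 := by
      rw [hd2]
      field_simp
      ring
    have hquad : s i * b i ^ 2 + 1 = c⁻¹ * s i * b i := by
      rw [hbi]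
      linear_combination hsd / 4
    have hmul : (s i * b i + (b i)⁻¹) * b i = (c⁻¹ * s i) * b i := by
      rw [add_mul, inv_mul_cancel₀ hbne]
      linear_combination hquad
    exact mul_right_cancel₀ hbne hmul
  have hbne : ∀ i, b i ≠ 0 := fun i => (hb0 i).ne'
  -- matrix construction
  set U : Matrix (Fin n) (Fin n) ℝ := (hSH.eigenvectorUnitary : Matrix (Fin n) (Fin n) ℝ)
    with hUdef
  have hU1 : U * Uᴴ = 1 := mem_unitaryGroup_iff.mp (hSH.eigenvectorUnitary).2
  have hU2 : Uᴴ * U = 1 := mem_unitaryGroup_iff'.mp (hSH.eigenvectorUnitary).2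
  set B : Matrix (Fin n) (Fin n) ℝ := U * diagonal b * Uᴴ with hBdef
  set B' : Matrix (Fin n) (Fin n) ℝ := U * diagonal (fun i => (b i)⁻¹) * Uᴴ with hB'def
  have hfun1 : (fun i => b i * (b i)⁻¹) = fun _ => (1 : ℝ) :=
    funext fun i => mul_inv_cancel₀ (hbne i)
  have hBB' : B * B' = 1 := by
    rw [hBdef, hB'def]
    calc U * diagonal b * Uᴴ * (U * diagonal (fun i => (b i)⁻¹) * Uᴴ)
        = U * diagonal b * (Uᴴ * U) * (diagonal (fun i => (b i)⁻¹) * Uᴴ) := by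
          simp only [Matrix.mul_assoc]
      _ = U * (diagonal b * diagonal (fun i => (b i)⁻¹)) * Uᴴ := by
          rw [hU2]; simp only [Matrix.mul_one, Matrix.mul_assoc]
      _ = U * Uᴴ := by
          rw [diagonal_mul_diagonal, hfun1, diagonal_one, Matrix.mul_one]
      _ = 1 := hU1
  have hBunit : IsUnit B.det := Matrix.isUnit_det_of_right_inverse hBB'
  have hBinv : B⁻¹ = B' := Matrix.inv_eq_right_inv hBB'
  have hB'herm : B'.IsHermitian :=
    isHermitian_mul_mul_conjTranspose U (isHermitian_diagonal _)
  -- spectral theorem for S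
  have hspec : S = U * diagonal s * Uᴴ := by
    have h := hSH.spectral_theorem
    simpa only [RCLike.ofReal_real_eq_id, Function.comp_def, id, Unitary.conjStarAlgAut_apply,
      Unitary.coe_star, Matrix.star_eq_conjTranspose] using h
  -- key matrix identity
  have hmat : S * B + B' = c⁻¹ • S := by
    have hSB : S * B = U * diagonal (fun i => s i * b i) * Uᴴ := by
      rw [hspec, hBdef]
      calc U * diagonal s * Uᴴ * (U * diagonal b * Uᴴ)
          = U * diagonal s * (Uᴴ * U) * (diagonal b * Uᴴ) := by
            simp only [Matrix.mul_assoc]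
        _ = U * (diagonal s * diagonal b) * Uᴴ := by
            rw [hU2]; simp only [Matrix.mul_one, Matrix.mul_assoc]
        _ = U * diagonal (fun i => s i * b i) * Uᴴ := by rw [diagonal_mul_diagonal]
    have hadd : ((fun i => s i * b i) + fun i => (b i)⁻¹) = fun i => c⁻¹ * s i :=
      funext fun i => hkey i
    have hsmul : (fun i => c⁻¹ * s i) = c⁻¹ • s := rfl
    rw [hSB, hB'def, hspec]
    calc U * diagonal (fun i => s i * b i) * Uᴴ + U * diagonal (fun i => (b i)⁻¹) * Uᴴ
        = U * (diagonal (fun i => s i * b i) + diagonal (fun i => (b i)⁻¹)) * Uᴴ := by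
          rw [Matrix.mul_add, Matrix.add_mul]
      _ = U * diagonal (fun i => c⁻¹ * s i) * Uᴴ := by
          rw [diagonal_add]
          rw [show (fun i => s i * b i + (b i)⁻¹) = fun i => c⁻¹ * s i from funext hkey]
      _ = c⁻¹ • (U * diagonal s * Uᴴ) := by
          simp only [hsmul, diagonal_smul, Matrix.mul_smul, Matrix.smul_mul]
  -- conclude
  have hMHT : Mᴴ = Mᵀ := conjTranspose_eq_transpose_of_trivial M
  have hTS : (Mᵀ)⁻¹ * S = M := by
    rw [hSdef, hMHT, ← Matrix.mul_assoc, Matrix.nonsing_inv_mul _ hMT, Matrix.one_mul]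
  refine ⟨c, M * B, hc0, ?_, ?_⟩
  · rw [det_mul]; exact hM.mul hBunit
  · have hMB : (M * B)⁻¹ = B' * M⁻¹ := by rw [Matrix.mul_inv_rev, hBinv]
    have hMBT : ((M * B)⁻¹)ᵀ = (Mᵀ)⁻¹ * B' := by
      have hB'T : B'ᵀ = B' := by
        rw [← conjTranspose_eq_transpose_of_trivial]; exact hB'herm
      rw [hMB, transpose_mul, Matrix.transpose_nonsing_inv, hB'T]
    rw [hMBT]
    have step : (Mᵀ)⁻¹ * (S * B + B') = c⁻¹ • M := by
      rw [hmat, Matrix.mul_smul, hTS]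
    have step2 : (Mᵀ)⁻¹ * (S * B + B') = M * B + (Mᵀ)⁻¹ * B' := by
      rw [Matrix.mul_add, ← Matrix.mul_assoc, hTS]
    rw [← step2, step, smul_smul, mul_inv_cancel₀ hc0.ne', one_smul]
end
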